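/- Let κ, ρ, σ be density matrices on M_n(ℂ) with κ ⊑ ρ and ρ ⊑ σ in the QPE order. Then for every t ∈ [0,1], (1−t)•ρ + t•κ ⊑ (1−t)•σ + t•κ. In particular (taking κ = ⊥ₙ), the depolarizing map D_t(ρ) = (1−t)•ρ + t•⊥ₙ is monotone for the QPE order. -/

import Mathlib

open Matrix
open scoped ComplexOrder

/-!
Write `a = ρ⁺`, `b = σ⁺`, `c = κ⁺`. If `κ ⊑ ρ`, the QPE inequality is tight on a top eigenvector
of `ρ`, which forces it to be an eigenvector of `κ` for `c`; by transitivity the same holds for the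
top eigenvectors of `σ`. So the mixtures have top eigenvalues `(1-t)a + tc` and `(1-t)b + tc`, and
`a` times their QPE difference is
`((1-t)²a + t(1-t)c) (bρ - aσ) + t(1-t)(b-a) (aκ - cρ)`,
which is positive semidefinite because `a ≤ b` (take traces in `bρ - aσ ≥ 0`).
The completely mixed state lies below every state, which gives the depolarizing case.
-/

/-- The largest eigenvalue of a matrix (for a positive semidefinite matrix this
equals the operator norm). -/
noncomputable def maxEig {m : Type*} [Fintype m] (A : Matrix m m ℂ) : ℝ :=
  sSup {a : ℝ | ∃ v : m → ℂ, v ≠ 0 ∧ A.mulVec v = (a : ℂ) • v}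

/-- A density matrix: positive semidefinite with trace 1. -/
def IsDensity {m : Type*} [Fintype m] (ρ : Matrix m m ℂ) : Prop :=
  ρ.PosSemidef ∧ ρ.trace = 1

/-- The quantum positive evidence (QPE) order: ρ ⊑ σ iff σ⁺•ρ - ρ⁺•σ ≥ 0. -/
def QPE {m : Type*} [Fintype m] (ρ σ : Matrix m m ℂ) : Prop :=
  (maxEig σ • ρ - maxEig ρ • σ).PosSemidef

variable {m : Type*}

theorem Matrix.PosSemidef.of_smul {A : Matrix m m ℂ} {c : ℝ} (hc : 0 < c)
    (h : (c • A).PosSemidef) : A.PosSemidef := by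
  simpa [smul_smul, inv_mul_cancel₀ hc.ne'] using h.smul (inv_nonneg.mpr hc.le)

theorem posSemidef_mix_sub_mix {κ ρ σ : Matrix m m ℂ} {a b c t : ℝ} (ha : 0 < a) (hab : a ≤ b)
    (hc : 0 ≤ c) (ht0 : 0 ≤ t) (ht1 : t ≤ 1) (hρσ : (b • ρ - a • σ).PosSemidef)
    (hκρ : (a • κ - c • ρ).PosSemidef) :
    (((1 - t) * b + t * c) • ((1 - t) • ρ + t • κ)
      - ((1 - t) * a + t * c) • ((1 - t) • σ + t • κ)).PosSemidef := by
  refine PosSemidef.of_smul ha ?_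
  have hsplit : a • (((1 - t) * b + t * c) • ((1 - t) • ρ + t • κ)
      - ((1 - t) * a + t * c) • ((1 - t) • σ + t • κ))
      = ((1 - t) ^ 2 * a + t * (1 - t) * c) • (b • ρ - a • σ)
        + (t * (1 - t) * (b - a)) • (a • κ - c • ρ) := by
    module
  have hta : 0 ≤ t * (1 - t) := mul_nonneg ht0 (sub_nonneg.mpr ht1)
  rw [hsplit]
  exact (hρσ.smul (add_nonneg (mul_nonneg (sq_nonneg _) ha.le) (mul_nonneg hta hc))).add
    (hκρ.smul (mul_nonneg hta (sub_nonneg.mpr hab)))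

variable [Fintype m]

theorem Matrix.PosSemidef.mulVec_eq_zero_of_add_mulVec_eq_zero {𝕜 : Type*} [RCLike 𝕜]
    {P Q : Matrix m m 𝕜} (hP : P.PosSemidef) (hQ : Q.PosSemidef) {v : m → 𝕜}
    (h : (P + Q) *ᵥ v = 0) : P *ᵥ v = 0 := by
  have hsum : star v ⬝ᵥ P *ᵥ v + star v ⬝ᵥ Q *ᵥ v = 0 := by
    rw [← dotProduct_add, ← add_mulVec, h, dotProduct_zero]
  have hPv := ((add_eq_zero_iff_of_nonneg (hP.dotProduct_mulVec_nonneg v)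
    (hQ.dotProduct_mulVec_nonneg v)).mp hsum).1
  exact (hP.dotProduct_mulVec_zero_iff v).mp hPv

section maxEig

variable [DecidableEq m]

theorem le_of_mulVec_eq_smul_of_posSemidef {A : Matrix m m ℂ} {a c : ℝ} {v : m → ℂ}
    (hA : (c • 1 - A).PosSemidef) (hv : v ≠ 0) (hav : A *ᵥ v = a • v) : a ≤ c := by
  have hcv : (c • 1 - A) *ᵥ v = ((c - a : ℝ) : ℂ) • v := by
    rw [sub_mulVec, smul_mulVec, one_mulVec, hav, Complex.coe_smul, sub_smul]
  have h := hA.dotProduct_mulVec_nonneg v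
  rw [hcv, dotProduct_smul, smul_eq_mul] at h
  by_contra! hca
  have hneg : ((c - a : ℝ) : ℂ) < 0 := by exact_mod_cast sub_neg.mpr hca
  exact lt_irrefl _ <|
    h.trans_lt (mul_neg_of_neg_of_pos hneg (dotProduct_star_self_pos_iff.mpr hv))

theorem maxEig_eq_of_mulVec_eq_smul {A : Matrix m m ℂ} {c : ℝ} {v : m → ℂ} (hv : v ≠ 0)
    (hcv : A *ᵥ v = c • v) (hA : (c • 1 - A).PosSemidef) : maxEig A = c := by
  have hmem : c ∈ {a : ℝ | ∃ v : m → ℂ, v ≠ 0 ∧ A *ᵥ v = (a : ℂ) • v} :=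
    ⟨v, hv, by rwa [Complex.coe_smul]⟩
  have hub : ∀ a ∈ {a : ℝ | ∃ v : m → ℂ, v ≠ 0 ∧ A *ᵥ v = (a : ℂ) • v}, a ≤ c := by
    rintro a ⟨w, hw, haw⟩
    exact le_of_mulVec_eq_smul_of_posSemidef hA hw (by rwa [← Complex.coe_smul])
  exact le_antisymm (csSup_le ⟨c, hmem⟩ hub) (le_csSup ⟨c, hub⟩ hmem)

theorem maxEig_smul_add_smul_of_common_eigenvector {A B : Matrix m m ℂ} {a b s t : ℝ}
    {v : m → ℂ} (hs : 0 ≤ s) (ht : 0 ≤ t) (hv : v ≠ 0) (hav : A *ᵥ v = a • v) (hbv : B *ᵥ v = b • v)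
    (hA : (a • 1 - A).PosSemidef) (hB : (b • 1 - B).PosSemidef) :
    maxEig (s • A + t • B) = s * a + t * b := by
  refine maxEig_eq_of_mulVec_eq_smul hv ?_ ?_
  · rw [add_mulVec, smul_mulVec, smul_mulVec, hav, hbv]
    module
  · have hsplit : (s * a + t * b) • 1 - (s • A + t • B) = s • (a • 1 - A) + t • (b • 1 - B) := by
      module
    rw [hsplit]
    exact (hA.smul hs).add (hB.smul ht)

theorem maxEig_smul_one [Nonempty m] (c : ℝ) : maxEig (c • 1 : Matrix m m ℂ) = c := by
  refine maxEig_eq_of_mulVec_eq_smul (v := fun _ => 1) (Function.ne_iff.mpr ?_) ?_ ?_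
  · exact ⟨Classical.arbitrary m, one_ne_zero⟩
  · rw [smul_mulVec, one_mulVec]
  · rw [sub_self]
    exact .zero

open scoped MatrixOrder in
theorem Matrix.IsHermitian.posSemidef_smul_one_sub {A : Matrix m m ℂ} (hA : A.IsHermitian)
    {c : ℝ} (h : ∀ i, hA.eigenvalues i ≤ c) : (c • 1 - A).PosSemidef := by
  rw [← Algebra.algebraMap_eq_smul_one, ← Matrix.le_iff]
  refine le_algebraMap_of_spectrum_le ?_ hA
  rw [hA.spectrum_real_eq_range_eigenvalues]
  rintro _ ⟨i, rfl⟩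
  exact h i

theorem Matrix.IsHermitian.exists_mulVec_eq_eigenvalues_smul {A : Matrix m m ℂ}
    (hA : A.IsHermitian) (i : m) : ∃ v : m → ℂ, v ≠ 0 ∧ A *ᵥ v = hA.eigenvalues i • v :=
  ⟨_, (WithLp.ofLp_eq_zero 2).ne.mpr (hA.eigenvectorBasis.orthonormal.ne_zero i),
    hA.mulVec_eigenvectorBasis i⟩

variable [Nonempty m] {A : Matrix m m ℂ}

theorem Matrix.IsHermitian.maxEig_eq_sup' (hA : A.IsHermitian) :
    maxEig A = Finset.univ.sup' Finset.univ_nonempty hA.eigenvalues := by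
  obtain ⟨i, -, hi⟩ := Finset.exists_mem_eq_sup' Finset.univ_nonempty hA.eigenvalues
  obtain ⟨v, hv, hAv⟩ := hA.exists_mulVec_eq_eigenvalues_smul i
  rw [hi]
  exact maxEig_eq_of_mulVec_eq_smul hv hAv
    (hA.posSemidef_smul_one_sub fun j => hi ▸ Finset.le_sup' _ (Finset.mem_univ j))

theorem Matrix.IsHermitian.eigenvalues_le_maxEig (hA : A.IsHermitian) (i : m) :
    hA.eigenvalues i ≤ maxEig A :=
  hA.maxEig_eq_sup' ▸ Finset.le_sup' _ (Finset.mem_univ i)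

theorem Matrix.IsHermitian.posSemidef_maxEig_smul_one_sub (hA : A.IsHermitian) :
    (maxEig A • 1 - A).PosSemidef :=
  hA.posSemidef_smul_one_sub hA.eigenvalues_le_maxEig

theorem Matrix.IsHermitian.exists_mulVec_eq_maxEig_smul (hA : A.IsHermitian) :
    ∃ v : m → ℂ, v ≠ 0 ∧ A *ᵥ v = maxEig A • v := by
  obtain ⟨i, -, hi⟩ := Finset.exists_mem_eq_sup' Finset.univ_nonempty hA.eigenvalues
  rw [hA.maxEig_eq_sup', hi]
  exact hA.exists_mulVec_eq_eigenvalues_smul i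

end maxEig

section density

variable {ρ : Matrix m m ℂ}

theorem IsDensity.nonempty (hρ : IsDensity ρ) : Nonempty m := by
  by_contra h
  rw [not_nonempty_iff] at h
  simpa [trace_eq_zero_of_isEmpty] using hρ.2

theorem IsDensity.maxEig_pos [DecidableEq m] (hρ : IsDensity ρ) : 0 < maxEig ρ := by
  have := hρ.nonempty
  obtain ⟨hpsd, htr⟩ := hρ
  rw [hpsd.isHermitian.trace_eq_sum_eigenvalues, ← RCLike.ofReal_sum, ← RCLike.ofReal_one] at htr
  by_contra! h
  have := Finset.sum_nonpos (s := Finset.univ) fun i _ ↦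
    (hpsd.isHermitian.eigenvalues_le_maxEig i).trans h
  linarith [RCLike.ofReal_injective htr]

theorem isDensity_inv_card_smul_one [DecidableEq m] [Nonempty m] :
    IsDensity ((Fintype.card m : ℝ)⁻¹ • (1 : Matrix m m ℂ)) := by
  refine ⟨PosSemidef.one.smul (by positivity), ?_⟩
  rw [trace_smul, trace_one, Complex.real_smul]
  push_cast
  exact inv_mul_cancel₀ (by simp)

end density

section QPE

variable {κ ρ σ : Matrix m m ℂ}

theorem QPE.maxEig_le (hρ : IsDensity ρ) (hσ : IsDensity σ) (h : QPE ρ σ) :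
    maxEig ρ ≤ maxEig σ := by
  have htr := h.trace_nonneg
  rw [trace_sub, trace_smul, trace_smul, hρ.2, hσ.2, Complex.real_smul, Complex.real_smul,
    mul_one, mul_one, ← Complex.ofReal_sub, Complex.zero_le_real] at htr
  linarith

theorem QPE.trans (hκρ : QPE κ ρ) (hρσ : QPE ρ σ) (hρ : 0 < maxEig ρ) (hκ : 0 ≤ maxEig κ)
    (hσ : 0 ≤ maxEig σ) : QPE κ σ := by
  refine PosSemidef.of_smul hρ ?_
  have hsplit : maxEig ρ • (maxEig σ • κ - maxEig κ • σ)
      = maxEig σ • (maxEig ρ • κ - maxEig κ • ρ) + maxEig κ • (maxEig σ • ρ - maxEig ρ • σ) := by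
    module
  rw [hsplit]
  exact (hκρ.smul hσ).add (hρσ.smul hκ)

theorem QPE.mulVec_eq_maxEig_smul [DecidableEq m] (h : QPE κ ρ) (hρ : 0 < maxEig ρ)
    (hκ : (maxEig κ • 1 - κ).PosSemidef) {v : m → ℂ} (hv : ρ *ᵥ v = maxEig ρ • v) :
    κ *ᵥ v = maxEig κ • v := by
  have hsplit : maxEig ρ • (maxEig κ • 1 - κ) + (maxEig ρ • κ - maxEig κ • ρ)
      = maxEig κ • (maxEig ρ • 1 - ρ) := by
    module
  have hzero := (hκ.smul hρ.le).mulVec_eq_zero_of_add_mulVec_eq_zero h <| by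
    rw [hsplit, smul_mulVec, sub_mulVec, smul_mulVec, one_mulVec, hv, sub_self, smul_zero]
  rw [smul_mulVec, sub_mulVec, smul_mulVec, one_mulVec, smul_eq_zero, sub_eq_zero] at hzero
  exact (hzero.resolve_left hρ.ne').symm

theorem QPE.one_sub_smul_add_smul [DecidableEq m] (hκ : IsDensity κ) (hρ : IsDensity ρ)
    (hσ : IsDensity σ) (hκρ : QPE κ ρ) (hρσ : QPE ρ σ) {t : ℝ} (ht0 : 0 ≤ t) (ht1 : t ≤ 1) :
    QPE ((1 - t) • ρ + t • κ) ((1 - t) • σ + t • κ) := by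
  have := hρ.nonempty
  obtain ⟨v, hv, hρv⟩ := hρ.1.isHermitian.exists_mulVec_eq_maxEig_smul
  obtain ⟨w, hw, hσw⟩ := hσ.1.isHermitian.exists_mulVec_eq_maxEig_smul
  have hκ1 := hκ.1.isHermitian.posSemidef_maxEig_smul_one_sub
  have hκσ := hκρ.trans hρσ hρ.maxEig_pos hκ.maxEig_pos.le hσ.maxEig_pos.le
  have hmixρ := maxEig_smul_add_smul_of_common_eigenvector (sub_nonneg.mpr ht1) ht0 hv hρv
    (hκρ.mulVec_eq_maxEig_smul hρ.maxEig_pos hκ1 hρv)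
    hρ.1.isHermitian.posSemidef_maxEig_smul_one_sub hκ1
  have hmixσ := maxEig_smul_add_smul_of_common_eigenvector (sub_nonneg.mpr ht1) ht0 hw hσw
    (hκσ.mulVec_eq_maxEig_smul hσ.maxEig_pos hκ1 hσw)
    hσ.1.isHermitian.posSemidef_maxEig_smul_one_sub hκ1
  unfold QPE
  rw [hmixρ, hmixσ]
  exact posSemidef_mix_sub_mix hρ.maxEig_pos (hρσ.maxEig_le hρ hσ) hκ.maxEig_pos.le ht0 ht1
    hρσ hκρ

theorem qpe_smul_one [DecidableEq m] [Nonempty m] {c : ℝ} (hc : 0 ≤ c) (hρ : ρ.IsHermitian) :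
    QPE (c • 1) ρ := by
  unfold QPE
  rw [maxEig_smul_one]
  have hsplit : maxEig ρ • c • (1 : Matrix m m ℂ) - c • ρ = c • (maxEig ρ • 1 - ρ) := by
    module
  rw [hsplit]
  exact hρ.posSemidef_maxEig_smul_one_sub.smul hc

end QPE

theorem stmt15 {n : ℕ} (κ ρ σ : Matrix (Fin n) (Fin n) ℂ)
    (hκ : IsDensity κ) (hρ : IsDensity ρ) (hσ : IsDensity σ)
    (h1 : QPE κ ρ) (h2 : QPE ρ σ) (t : ℝ) (ht : t ∈ Set.Icc (0 : ℝ) 1) :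
    QPE ((1 - t) • ρ + t • κ) ((1 - t) • σ + t • κ) ∧
    QPE ((1 - t) • ρ + t • ((n : ℝ)⁻¹ • (1 : Matrix (Fin n) (Fin n) ℂ)))
        ((1 - t) • σ + t • ((n : ℝ)⁻¹ • (1 : Matrix (Fin n) (Fin n) ℂ))) := by
  obtain ⟨ht0, ht1⟩ := ht
  have := hρ.nonempty
  have hbot : IsDensity ((n : ℝ)⁻¹ • (1 : Matrix (Fin n) (Fin n) ℂ)) := by
    simpa using isDensity_inv_card_smul_one (m := Fin n)
  have hbotρ : QPE ((n : ℝ)⁻¹ • (1 : Matrix (Fin n) (Fin n) ℂ)) ρ :=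
    qpe_smul_one (by positivity) hρ.1.isHermitian
  exact ⟨h1.one_sub_smul_add_smul hκ hρ hσ h2 ht0 ht1,
    hbotρ.one_sub_smul_add_smul hbot hρ hσ h2 ht0 ht1⟩
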